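/- Let A : X ⇉ X* be a maximal monotone linear relation and suppose (z, y*) ∈ dom F_A, where F_A is the Fitzpatrick function of A. Then z ∈ cl(dom A). -/

import Mathlib

/-!
If `z ∉ cl (dom A)`, Hahn–Banach gives a functional `f` vanishing on the subspace `dom A` with
`f z ≠ 0`. Monotonicity against `(0, 0)` and maximality put `(0, t • f)` in the graph for every
real `t`; these pairs contribute `t * f z` to `F_A (z, y*)`, which is therefore `⊤`.
-/

theorem eq_zero_of_forall_mul_le {c r : ℝ} (h : ∀ t : ℝ, t * c ≤ r) : c = 0 := by
  by_contra hc
  have := h ((r + 1) / c)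
  rw [div_mul_cancel₀ _ hc] at this
  linarith

theorem Submodule.exists_strongDual_eq_zero_ne_zero_of_notMem_closure {E : Type*}
    [TopologicalSpace E] [AddCommGroup E] [Module ℝ E] [IsTopologicalAddGroup E]
    [ContinuousSMul ℝ E] [LocallyConvexSpace ℝ E] (S : Submodule ℝ E) {z : E}
    (hz : z ∉ closure (S : Set E)) : ∃ f : StrongDual ℝ E, (∀ x ∈ S, f x = 0) ∧ f z ≠ 0 := by
  obtain ⟨f, u, hfS, hfz⟩ := geometric_hahn_banach_closed_point
    (S.topologicalClosure_coe ▸ S.topologicalClosure.convex) isClosed_closure hz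
  have hf : ∀ x ∈ S, f x = 0 := fun x hx ↦ eq_zero_of_forall_mul_le fun t ↦ by
    simpa using (hfS (t • x) (subset_closure (S.smul_mem t hx))).le
  have hu : 0 < u := by simpa using hfS 0 (subset_closure S.zero_mem)
  exact ⟨f, hf, (hu.trans hfz).ne'⟩

section LinearRelation

variable {X : Type*} [TopologicalSpace X] [AddCommGroup X] [Module ℝ X]

noncomputable def fitzpatrick (G : Set (X × (X →L[ℝ] ℝ))) (p : X × (X →L[ℝ] ℝ)) : EReal :=
  sSup {r : EReal | ∃ q ∈ G, r = ((q.2 p.1 + p.2 q.1 - q.2 q.1 : ℝ) : EReal)}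

theorem le_fitzpatrick {G : Set (X × (X →L[ℝ] ℝ))} (p : X × (X →L[ℝ] ℝ)) {q} (hq : q ∈ G) :
    ((q.2 p.1 + p.2 q.1 - q.2 q.1 : ℝ) : EReal) ≤ fitzpatrick G p :=
  le_sSup ⟨q, hq, rfl⟩

theorem fitzpatrick_eq_top_of_forall_smul_mem {G : Set (X × (X →L[ℝ] ℝ))} {f : X →L[ℝ] ℝ}
    (hG : ∀ t : ℝ, ((0 : X), t • f) ∈ G) {z : X} (hfz : f z ≠ 0) (ystar : X →L[ℝ] ℝ) :
    fitzpatrick G (z, ystar) = ⊤ := by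
  by_contra hne
  obtain ⟨r, hr, -⟩ := EReal.lt_iff_exists_real_btwn.mp (lt_top_iff_ne_top.mpr hne)
  refine hfz (eq_zero_of_forall_mul_le (r := r) fun t ↦ EReal.coe_le_coe_iff.mp ?_)
  simpa using (le_fitzpatrick (z, ystar) (hG t)).trans hr.le

theorem mk_zero_mem_of_forall_fst_eq_zero (G : Set (X × (X →L[ℝ] ℝ)))
    (hmono : ∀ q ∈ G, 0 ≤ q.2 q.1)
    (hmax : ∀ p : X × (X →L[ℝ] ℝ), (∀ q ∈ G, 0 ≤ (p.2 - q.2) (p.1 - q.1)) → p ∈ G)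
    {f : X →L[ℝ] ℝ} (hf : ∀ q ∈ G, f q.1 = 0) : ((0 : X), f) ∈ G :=
  hmax _ fun q hq ↦ by simpa [hf q hq] using hmono q hq

end LinearRelation

theorem stmt_16_general {X : Type*} [NormedAddCommGroup X] [NormedSpace ℝ X]
    (G : Submodule ℝ (X × (X →L[ℝ] ℝ)))
    (hmono : ∀ p ∈ G, ∀ q ∈ G, 0 ≤ (p.2 - q.2) (p.1 - q.1))
    (hmax : ∀ p : X × (X →L[ℝ] ℝ), (∀ q ∈ G, 0 ≤ (p.2 - q.2) (p.1 - q.1)) → p ∈ G)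
    (F : X × (X →L[ℝ] ℝ) → EReal)
    (hF : ∀ p, F p = sSup {r : EReal | ∃ q ∈ (G : Set (X × (X →L[ℝ] ℝ))),
      r = ((q.2 p.1 + p.2 q.1 - q.2 q.1 : ℝ) : EReal)})
    (z : X) (ystar : X →L[ℝ] ℝ) (hdomF : F (z, ystar) < ⊤) :
    z ∈ closure {x : X | ∃ xstar, (x, xstar) ∈ G} := by
  have hdom : {x : X | ∃ xstar, (x, xstar) ∈ G} = G.map (LinearMap.fst ℝ _ _) := by
    ext x; simp
  by_contra hz
  obtain ⟨f, hf, hfz⟩ :=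
    (G.map (LinearMap.fst ℝ _ _)).exists_strongDual_eq_zero_ne_zero_of_notMem_closure (hdom ▸ hz)
  have hmemG (t : ℝ) : ((0 : X), t • f) ∈ G :=
    mk_zero_mem_of_forall_fst_eq_zero (G : Set _)
      (fun q (hq : q ∈ G) ↦ by simpa using hmono q hq 0 G.zero_mem) hmax
      fun q (hq : q ∈ G) ↦ by simp [hf q.1 ⟨q, hq, rfl⟩]
  exact hdomF.ne ((hF _).trans (fitzpatrick_eq_top_of_forall_smul_mem hmemG hfz ystar))

/-- For a maximal monotone linear relation `A` with graph `G`, if `(z, y*)` is in the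
domain of the Fitzpatrick function, then `z ∈ cl (dom A)`. -/
theorem stmt_16 {X : Type*} [NormedAddCommGroup X] [NormedSpace ℝ X] [CompleteSpace X]
    (G : Submodule ℝ (X × (X →L[ℝ] ℝ)))
    (hmono : ∀ p ∈ G, ∀ q ∈ G, 0 ≤ (p.2 - q.2) (p.1 - q.1))
    (hmax : ∀ p : X × (X →L[ℝ] ℝ), (∀ q ∈ G, 0 ≤ (p.2 - q.2) (p.1 - q.1)) → p ∈ G)
    (F : X × (X →L[ℝ] ℝ) → EReal)
    (hF : ∀ p, F p = sSup {r : EReal | ∃ q ∈ (G : Set (X × (X →L[ℝ] ℝ))),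
      r = ((q.2 p.1 + p.2 q.1 - q.2 q.1 : ℝ) : EReal)})
    (z : X) (ystar : X →L[ℝ] ℝ) (hdomF : F (z, ystar) < ⊤) :
    z ∈ closure {x : X | ∃ xstar, (x, xstar) ∈ G} :=
  stmt_16_general G hmono hmax F hF z ystar hdomF
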